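/- Let n = 3ν with ν ≥ 3 and n odd. Define a¹ = (1,0,0,1,0,0,…,1,0,0) ∈ {0,1}ⁿ and a^i its rotation by i−1 positions, and w^i = 1 − a^i for i = 1,2,3. Then each w^i is a vertex of Q(C(n,2)) with w^i·1 = 2ν, every other vertex v of Q(C(n,2)) not among w¹,w²,w³ satisfies v·1 ≤ 2ν − 1, and for i ≠ j the vertices w^i and w^j are not adjacent in Q(C(n,2)). -/

import Mathlib

open Finset

/-- Support of a vector. -/
def supp {n : ℕ} (x : Fin n → ℝ) : Set (Fin n) := {j | x j ≠ 0}

/-- Support of the `t`-th row of a matrix. -/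
def rowSupp {m n : ℕ} (A : Matrix (Fin m) (Fin n) ℝ) (t : Fin m) : Set (Fin n) :=
  {j | A t j ≠ 0}

def IsBinaryMatrix {m n : ℕ} (A : Matrix (Fin m) (Fin n) ℝ) : Prop :=
  ∀ t j, A t j = 0 ∨ A t j = 1

def IsBinaryVec {n : ℕ} (x : Fin n → ℝ) : Prop := ∀ j, x j = 0 ∨ x j = 1

/-- The polyhedron `{x | A x ≥ b, x ≥ 0}`. -/
def polyP {m n : ℕ} (A : Matrix (Fin m) (Fin n) ℝ) (b : Fin m → ℝ) : Set (Fin n → ℝ) :=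
  {x | (∀ i, b i ≤ ∑ j, A i j * x j) ∧ ∀ j, 0 ≤ x j}

/-- The linear relaxation `Q(A) = {x | A x ≥ 1, x ≥ 0}`. -/
def polyQ {m n : ℕ} (A : Matrix (Fin m) (Fin n) ℝ) : Set (Fin n → ℝ) :=
  {x | (∀ i, 1 ≤ ∑ j, A i j * x j) ∧ ∀ j, 0 ≤ x j}

/-- The set covering polyhedron `Q*(A)`: convex hull of nonnegative integer solutions of
`A x ≥ 1`. -/
def Qstar {m n : ℕ} (A : Matrix (Fin m) (Fin n) ℝ) : Set (Fin n → ℝ) :=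
  convexHull ℝ {x | (∀ j, ∃ k : ℕ, x j = k) ∧ ∀ i, 1 ≤ ∑ j, A i j * x j}

/-- A vertex of a convex set is an extreme point. -/
def IsVertex {n : ℕ} (S : Set (Fin n → ℝ)) (v : Fin n → ℝ) : Prop :=
  v ∈ S.extremePoints ℝ

/-- Two distinct vertices are adjacent when they lie on a common edge, i.e. the segment
joining them is a face (extreme subset) of `S`. -/
def AdjacentVerts {n : ℕ} (S : Set (Fin n → ℝ)) (v w : Fin n → ℝ) : Prop :=
  v ≠ w ∧ IsVertex S v ∧ IsVertex S w ∧ IsExtreme ℝ S (segment ℝ v w)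

/-- There is a row support `C` with `C ∩ supp v = {p}` and `C ∩ supp v' = {p'}`. -/
def jsgEdge {m n : ℕ} (A : Matrix (Fin m) (Fin n) ℝ) (v v' : Fin n → ℝ)
    (p p' : Fin n) : Prop :=
  ∃ t, rowSupp A t ∩ supp v = {p} ∧ rowSupp A t ∩ supp v' = {p'}

/-- The joint saturation graph of `v` and `v'` with respect to `A`. -/
def JSG {m n : ℕ} (A : Matrix (Fin m) (Fin n) ℝ) (v v' : Fin n → ℝ) :
    SimpleGraph (Fin n) where
  Adj p p' := p ≠ p' ∧ (jsgEdge A v v' p p' ∨ jsgEdge A v v' p' p)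
  symm := ⟨fun p p' h => ⟨h.1.symm, h.2.symm⟩⟩
  loopless := ⟨fun p h => h.1 rfl⟩

/-- The node set of the joint saturation graph: the symmetric difference of the supports. -/
def jsgNodes {n : ℕ} (v v' : Fin n → ℝ) : Set (Fin n) :=
  (supp v \ supp v') ∪ (supp v' \ supp v)

def JSGConnected {m n : ℕ} (A : Matrix (Fin m) (Fin n) ℝ) (v v' : Fin n → ℝ) : Prop :=
  ∀ p ∈ jsgNodes v v', ∀ q ∈ jsgNodes v v', (JSG A v v').Reachable p q

/-- One of the two partite sets is contained in a single connected component. -/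
def JSGPartiteConnected {m n : ℕ} (A : Matrix (Fin m) (Fin n) ℝ) (v v' : Fin n → ℝ) : Prop :=
  (∀ p ∈ supp v \ supp v', ∀ q ∈ supp v \ supp v', (JSG A v v').Reachable p q) ∨
  (∀ p ∈ supp v' \ supp v, ∀ q ∈ supp v' \ supp v, (JSG A v v').Reachable p q)

/-- Exactly two components, one of which is an isolated node. -/
def JSGAlmostConnected {m n : ℕ} (A : Matrix (Fin m) (Fin n) ℝ) (v v' : Fin n → ℝ) : Prop :=
  ∃ q ∈ jsgNodes v v', (∀ p, ¬ (JSG A v v').Adj q p) ∧ (jsgNodes v v' \ {q}).Nonempty ∧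
    ∀ p ∈ jsgNodes v v' \ {q}, ∀ r ∈ jsgNodes v v' \ {q}, (JSG A v v').Reachable p r

/-- The (directed) circular arc from `i` to `j` in `Fin n`. -/
def arc {n : ℕ} [NeZero n] (i j : Fin n) : Set (Fin n) :=
  {k | ∃ h : ℕ, h ≤ ((j - i : Fin n) : ℕ) ∧ k = i + Fin.ofNat n h}

/-- A matrix is row circular if each row support is a circular arc. -/
def RowCircular {m n : ℕ} [NeZero n] (A : Matrix (Fin m) (Fin n) ℝ) : Prop :=
  ∀ t, ∃ i j : Fin n, rowSupp A t = arc i j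

/-- The standard assumptions: binary, no dominating rows, between 2 and n-1 ones per row,
no all-zero or all-one column. -/
def StandardAssumptions {m n : ℕ} (A : Matrix (Fin m) (Fin n) ℝ) : Prop :=
  IsBinaryMatrix A ∧
  (∀ s t : Fin m, s ≠ t → ¬ rowSupp A s ⊆ rowSupp A t) ∧
  (∀ t, 2 ≤ (rowSupp A t).ncard ∧ (rowSupp A t).ncard ≤ n - 1) ∧
  (∀ j : Fin n, (∃ t, A t j ≠ 0) ∧ (∃ t, A t j = 0))

/-- `a` and `b` occur consecutively (in either order) in the list `l`. -/
def ListConsec {α : Type*} (l : List α) (a b : α) : Prop :=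
  ∃ k : ℕ, (l[k]? = some a ∧ l[k+1]? = some b) ∨ (l[k]? = some b ∧ l[k+1]? = some a)

/-- `a` and `b` occur cyclically consecutively (in either order) in the list `l`. -/
def CycConsec {α : Type*} (l : List α) (a b : α) : Prop :=
  ∃ k : ℕ, k < l.length ∧
    ((l[k]? = some a ∧ l[(k+1) % l.length]? = some b) ∨
     (l[k]? = some b ∧ l[(k+1) % l.length]? = some a))

/-- The set `S` induces a path (possibly a single node) in `G`. -/
def IsPathOn {n : ℕ} (G : SimpleGraph (Fin n)) (S : Set (Fin n)) : Prop :=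
  ∃ l : List (Fin n), l.Nodup ∧ (∀ x, x ∈ S ↔ x ∈ l) ∧
    (∀ a b, a ∈ S → G.Adj a b → ListConsec l a b) ∧
    (∀ a b, ListConsec l a b → G.Adj a b)

/-- The set `S` induces a cycle in `G`. -/
def IsCycleOn {n : ℕ} (G : SimpleGraph (Fin n)) (S : Set (Fin n)) : Prop :=
  ∃ l : List (Fin n), 3 ≤ l.length ∧ l.Nodup ∧ (∀ x, x ∈ S ↔ x ∈ l) ∧
    (∀ a b, a ∈ S → G.Adj a b → CycConsec l a b) ∧
    (∀ a b, CycConsec l a b → G.Adj a b)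

/-- `p` and `q` are cyclically consecutive elements of `S`. -/
def CyclConsecIn {n : ℕ} [NeZero n] (S : Set (Fin n)) (p q : Fin n) : Prop :=
  p ≠ q ∧ p ∈ S ∧ q ∈ S ∧ (arc p q ∩ S = {p, q} ∨ arc q p ∩ S = {p, q})

/-- The circulant matrix `C(n,2)` with row supports `{t, t+1}` (mod n). -/
def Cn2 (n : ℕ) [NeZero n] : Matrix (Fin n) (Fin n) ℝ :=
  fun t j => if j = t ∨ j = t + 1 then 1 else 0

/-- Append a row to a matrix. -/
def appendRow {m n : ℕ} (A : Matrix (Fin m) (Fin n) ℝ) (a : Fin n → ℝ) :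
    Matrix (Fin (m+1)) (Fin n) ℝ :=
  fun t j => if h : (t : ℕ) < m then A ⟨t, h⟩ j else a j

/-- A set of points is integral if all its extreme points are integer vectors. -/
def IsIntegralSet {n : ℕ} (S : Set (Fin n → ℝ)) : Prop :=
  ∀ x ∈ S.extremePoints ℝ, ∀ j, ∃ z : ℤ, x j = z

/-- A binary matrix is minimally nonideal if `Q(A)` is not integral but both restrictions
`Q(A) ∩ {x_i = 0}` and `Q(A) ∩ {x_i = 1}` are integral for every coordinate `i`. -/
def MinimallyNonideal {m n : ℕ} (A : Matrix (Fin m) (Fin n) ℝ) : Prop :=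
  ¬ IsIntegralSet (polyQ A) ∧
  ∀ i : Fin n, IsIntegralSet (polyQ A ∩ {x | x i = 0}) ∧
               IsIntegralSet (polyQ A ∩ {x | x i = 1})

/-- The matrix of the degenerate projective plane with `t+1` points and lines. -/
def Jmat (t : ℕ) : Matrix (Fin (t+1)) (Fin (t+1)) ℝ :=
  fun i j => if i = 0 then (if j = 0 then 0 else 1) else (if j = 0 ∨ j = i then 1 else 0)

/-- `A` is isomorphic to some degenerate projective plane matrix `J_t`, `t ≥ 2`. -/
def IsoToDegenProjPlane {m n : ℕ} (A : Matrix (Fin m) (Fin n) ℝ) : Prop :=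
  ∃ t : ℕ, 2 ≤ t ∧ ∃ (σ : Fin m ≃ Fin (t+1)) (τ : Fin n ≃ Fin (t+1)),
    ∀ i j, A i j = Jmat t (σ i) (τ j)

/-- `A₁` is the core of `A`: a square nonsingular row submatrix with `r` ones per row and
per column, all other rows of `A` having more than `r` ones. -/
def IsCore {m n : ℕ} (A : Matrix (Fin m) (Fin n) ℝ) (A₁ : Matrix (Fin n) (Fin n) ℝ)
    (r : ℕ) : Prop :=
  2 ≤ r ∧ A₁.det ≠ 0 ∧
  (∃ f : Fin n → Fin m, Function.Injective f ∧ (∀ i, A₁ i = A (f i)) ∧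
    ∀ t, t ∉ Set.range f → r < (rowSupp A t).ncard) ∧
  (∀ i, (rowSupp A₁ i).ncard = r) ∧ (∀ j, {i | A₁ i j ≠ 0}.ncard = r)

/-- `B₁` is the core of the blocker of `A`: a square nonsingular matrix whose rows are
binary vertices of `Q*(A)` with `s` ones per row and per column, all other binary
vertices of `Q*(A)` having more than `s` ones. -/
def IsBlockerCore {m n : ℕ} (A : Matrix (Fin m) (Fin n) ℝ) (B₁ : Matrix (Fin n) (Fin n) ℝ)
    (s : ℕ) : Prop :=
  2 ≤ s ∧ B₁.det ≠ 0 ∧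
  (∀ i, IsBinaryVec (B₁ i) ∧ IsVertex (Qstar A) (B₁ i)) ∧
  Function.Injective (fun i => B₁ i) ∧
  (∀ i, (rowSupp B₁ i).ncard = s) ∧ (∀ j, {i | B₁ i j ≠ 0}.ncard = s) ∧
  (∀ x, IsBinaryVec x → IsVertex (Qstar A) x → (∀ i, x ≠ B₁ i) → s < (supp x).ncard)

/-- `w^i` for `n = 3ν`: the complement of the characteristic vector of the residue class
`i` mod 3. -/
def wVec (n : ℕ) (i : Fin 3) : Fin n → ℝ :=
  fun k => if (k : ℕ) % 3 = (i : ℕ) then 0 else 1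

/-- `a^i` for `n = 3ν`: the characteristic vector of the residue class `i` mod 3
(`a¹ = (1,0,0,1,0,0,…)` corresponds to `i = 0`). -/
def aVec (n : ℕ) (i : ℕ) : Fin n → ℝ :=
  fun k => if (k : ℕ) % 3 = i then 1 else 0

/-! Feasibility for `C(n,2)` only constrains consecutive pairs, and a point of `Q(C(n,2))` is a
vertex iff it cannot be moved along any direction `±y` respecting its tight constraints. If every
row is tight at a vertex, the odd cycle forces all coordinates to be `1/2`; otherwise signs
alternating around the cycle, broken at a slack row, show the vertex is binary. A binary vertex
has a zero in every window of three consecutive coordinates, so summing the windows gives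
`3 (v · 1) ≤ 2n`, with equality only if every window has exactly one zero, i.e. `v` is
`3`-periodic, i.e. `v = w^i`; integrality of `v · 1` gives `v · 1 ≤ 2ν - 1` otherwise, and the
half-integral vertex has sum `3ν/2`. Finally the midpoint of `w^i` and `w^(i+1)` can be moved
along `e_i - e_(i+1)` inside `Q(C(n,2))` but not inside their segment, so the segment is no face.
-/

open Filter Topology

section Perturbation

variable {E : Type*} [AddCommGroup E] [Module ℝ E] {S F : Set E} {x y : E}

lemma IsExtreme.add_mem_of_sub_mem (hF : IsExtreme ℝ S F) (hx : x ∈ F) (h₁ : x + y ∈ S)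
    (h₂ : x - y ∈ S) : x + y ∈ F :=
  hF.left_mem_of_mem_openSegment h₁ h₂ hx (mem_openSegment_add_sub x y)

lemma eq_zero_of_add_mem_of_sub_mem (hx : x ∈ S.extremePoints ℝ) (h₁ : x + y ∈ S)
    (h₂ : x - y ∈ S) : y = 0 := by
  simpa using (isExtreme_singleton.2 hx).add_mem_of_sub_mem rfl h₁ h₂

end Perturbation

section PolyQ

variable {m n : ℕ} {A : Matrix (Fin m) (Fin n) ℝ} {v y : Fin n → ℝ}

lemma eventually_add_smul_mem_polyQ (hv : v ∈ polyQ A)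
    (hrow : ∀ i, ∑ j, A i j * v j = 1 → ∑ j, A i j * y j = 0)
    (hcol : ∀ j, v j = 0 → y j = 0) : ∀ᶠ ε in 𝓝 (0 : ℝ), v + ε • y ∈ polyQ A := by
  have near : ∀ {c a : ℝ} (b : ℝ), c < a → ∀ᶠ ε in 𝓝 (0 : ℝ), c < a + ε * b := fun b h =>
    Tendsto.eventually_const_lt h
      ((by fun_prop : Continuous fun ε : ℝ => _ + ε * b).tendsto' 0 _ (by simp))
  have hsum : ∀ i (ε : ℝ),
      ∑ j, A i j * (v + ε • y) j = ∑ j, A i j * v j + ε * ∑ j, A i j * y j := fun i ε => by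
    simp only [Pi.add_apply, Pi.smul_apply, smul_eq_mul, mul_add, sum_add_distrib, mul_sum]
    congr 1; exact sum_congr rfl fun j _ => by ring
  show ∀ᶠ ε in 𝓝 (0 : ℝ), (∀ i, _) ∧ ∀ j, _
  refine (eventually_all.2 fun i => ?_).and (eventually_all.2 fun j => ?_)
  · simp only [hsum]
    rcases (hv.1 i).eq_or_lt with h | h
    · exact Eventually.of_forall fun ε => by simp [← h, hrow i h.symm]
    · exact (near _ h).mono fun _ => le_of_lt
  · simp only [Pi.add_apply, Pi.smul_apply, smul_eq_mul]
    rcases (hv.2 j).eq_or_lt with h | h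
    · exact Eventually.of_forall fun ε => by simp [← h, hcol j h.symm]
    · exact (near _ h).mono fun _ => le_of_lt

lemma exists_pos_add_smul_mem_polyQ (hv : v ∈ polyQ A)
    (hrow : ∀ i, ∑ j, A i j * v j = 1 → ∑ j, A i j * y j = 0)
    (hcol : ∀ j, v j = 0 → y j = 0) :
    ∃ ε : ℝ, 0 < ε ∧ v + ε • y ∈ polyQ A ∧ v - ε • y ∈ polyQ A := by
  have h := eventually_add_smul_mem_polyQ hv hrow hcol
  have hneg : ∀ᶠ ε in 𝓝 (0 : ℝ), v - ε • y ∈ polyQ A := by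
    simpa [neg_smul, ← sub_eq_add_neg] using
      (continuous_neg.tendsto' (0 : ℝ) 0 neg_zero).eventually h
  exact (h.and hneg).exists_gt

lemma eq_zero_of_mem_extremePoints_polyQ (hv : v ∈ (polyQ A).extremePoints ℝ)
    (hrow : ∀ i, ∑ j, A i j * v j = 1 → ∑ j, A i j * y j = 0)
    (hcol : ∀ j, v j = 0 → y j = 0) : y = 0 := by
  obtain ⟨ε, hε, h₁, h₂⟩ := exists_pos_add_smul_mem_polyQ hv.1 hrow hcol
  exact (smul_eq_zero.1 (eq_zero_of_add_mem_of_sub_mem hv h₁ h₂)).resolve_left hε.ne'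

end PolyQ

lemma Fin.val_add_one_cases {n : ℕ} [NeZero n] (t : Fin n) :
    (t + 1).val = t.val + 1 ∨ (t + 1).val = 0 ∧ t.val + 1 = n := by
  rcases (show t.val + 1 ≤ n from t.isLt).lt_or_eq with h | h
  · exact .inl (Fin.val_add_one_of_lt' h)
  · refine .inr ⟨?_, h⟩
    rw [Fin.val_add, Fin.val_one', Nat.add_mod_mod, h, Nat.mod_self]

lemma Fin.val_add_one_of_add_one_ne_zero {n : ℕ} [NeZero n] {d : Fin n} (h : d + 1 ≠ 0) :
    (d + 1).val = d.val + 1 :=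
  d.val_add_one_cases.resolve_right fun h' => h (Fin.ext h'.1)

section Cn2

open Fin.NatCast

variable {n : ℕ} [NeZero n] {v y : Fin n → ℝ}

lemma sum_Cn2_mul (h1 : 1 < n) (t : Fin n) (x : Fin n → ℝ) :
    ∑ j, Cn2 n t j * x j = x t + x (t + 1) := by
  have hne : t ≠ t + 1 := by simp [Fin.ext_iff]; omega
  rw [Fintype.sum_eq_add t (t + 1) hne fun j hj => by simp [Cn2, hj.1, hj.2]]
  simp [Cn2, hne.symm]

lemma mem_polyQ_Cn2_iff (h1 : 1 < n) (x : Fin n → ℝ) :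
    x ∈ polyQ (Cn2 n) ↔ (∀ t, 1 ≤ x t + x (t + 1)) ∧ ∀ j, 0 ≤ x j := by
  simp only [polyQ, Set.mem_ofPred_eq, sum_Cn2_mul h1]

lemma eq_zero_of_isVertex_polyQ_Cn2 (h1 : 1 < n) (hv : IsVertex (polyQ (Cn2 n)) v)
    (hrow : ∀ t, v t + v (t + 1) = 1 → y t + y (t + 1) = 0)
    (hcol : ∀ j, v j = 0 → y j = 0) : y = 0 :=
  eq_zero_of_mem_extremePoints_polyQ hv (by simpa only [sum_Cn2_mul h1]) hcol

lemma eq_half_of_forall_add_eq_one (hodd : Odd n) (hall : ∀ t, v t + v (t + 1) = 1) :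
    v = fun _ => 1 / 2 := by
  set g : ℕ → ℝ := fun m => v (m : Fin n)
  have hg : ∀ m, g m + g (m + 1) = 1 := fun m => by simpa [g] using hall (m : Fin n)
  have hper2 : Function.Periodic g 2 := fun m => by linarith [hg m, hg (m + 1)]
  have hper : Function.Periodic g n := fun m => by simp [g]
  obtain ⟨k, hk⟩ := hodd
  have hstep : ∀ m, g (m + 1) = g m := fun m =>
    calc g (m + 1) = g (m + 1 + k * 2) := (hper2.nat_mul k (m + 1)).symm
      _ = g (m + n) := by rw [hk]; ring_nf
      _ = g m := hper m
  funext t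
  have := hg t.val
  rw [hstep] at this
  simpa [g] using (by linarith : g t.val = 1 / 2)

lemma isBinaryVec_of_isVertex_of_add_ne_one (h1 : 1 < n) (hv : IsVertex (polyQ (Cn2 n)) v)
    {e : Fin n} (he : v e + v (e + 1) ≠ 1) : IsBinaryVec v := by
  by_contra hnb
  obtain ⟨p, hp⟩ : ∃ p, v p ≠ 0 ∧ v p ≠ 1 := by simpa [IsBinaryVec, not_or] using hnb
  -- alternate signs around the cycle, the only repeated sign being across the slack row `e`
  set s : Fin n → ℝ := fun q => (-1) ^ (q - (e + 1)).val
  have hflip : ∀ t ≠ e, s (t + 1) = -s t := by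
    intro t ht
    have hshift : t + 1 - (e + 1) = t - (e + 1) + 1 := by abel
    have hne : t - (e + 1) + 1 ≠ 0 := fun h =>
      ht (add_right_cancel (sub_eq_zero.1 (hshift.trans h)))
    simp only [s, hshift, Fin.val_add_one_of_add_one_ne_zero hne, pow_succ, mul_neg_one]
  set y : Fin n → ℝ := fun q => if v q ≠ 0 ∧ v q ≠ 1 then s q else 0
  have hy : y = 0 := by
    refine eq_zero_of_isVertex_polyQ_Cn2 h1 hv (fun t ht => ?_) fun j hj => by simp [y, hj]
    by_cases hft : v t ≠ 0 ∧ v t ≠ 1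
    · have hft' : v (t + 1) ≠ 0 ∧ v (t + 1) ≠ 1 :=
        ⟨fun h => hft.2 (by linarith), fun h => hft.1 (by linarith)⟩
      have hte : t ≠ e := by rintro rfl; exact he ht
      simp only [y, if_pos hft, if_pos hft', hflip t hte, add_neg_cancel]
    · have hft' : ¬(v (t + 1) ≠ 0 ∧ v (t + 1) ≠ 1) := fun h =>
        hft ⟨fun h' => h.2 (by linarith), fun h' => h.1 (by linarith)⟩
      simp only [y, if_neg hft, if_neg hft', add_zero]
  simpa [y, hp, s] using congrFun hy p

theorem isBinaryVec_or_eq_half_of_isVertex (hodd : Odd n) (h1 : 1 < n)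
    (hv : IsVertex (polyQ (Cn2 n)) v) : IsBinaryVec v ∨ v = fun _ => 1 / 2 := by
  by_cases hall : ∀ t, v t + v (t + 1) = 1
  · exact .inr (eq_half_of_forall_add_eq_one hodd hall)
  · obtain ⟨e, he⟩ := not_forall.1 hall
    exact .inl (isBinaryVec_of_isVertex_of_add_ne_one h1 hv he)

lemma eq_of_mem_openSegment_of_le {a x y : ℝ} (h : a ∈ openSegment ℝ x y) (hx : a ≤ x)
    (hy : a ≤ y) : x = a ∧ y = a := by
  obtain ⟨s, t, hs, ht, hst, rfl⟩ := h
  simp only [smul_eq_mul] at hx hy ⊢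
  obtain rfl : x = y := by
    obtain rfl : t = 1 - s := by linarith
    nlinarith
  constructor <;> linear_combination (-hst) * x

theorem IsBinaryVec.isVertex_polyQ_Cn2_iff (h1 : 1 < n) (hb : IsBinaryVec v)
    (hv : v ∈ polyQ (Cn2 n)) :
    IsVertex (polyQ (Cn2 n)) v ↔ ∀ t, v t = 0 ∨ v (t + 1) = 0 ∨ v (t + 1 + 1) = 0 := by
  constructor
  · intro hvert t
    by_contra! h
    obtain ⟨h₀, h₁, h₂⟩ : v t = 1 ∧ v (t + 1) = 1 ∧ v (t + 1 + 1) = 1 :=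
      ⟨(hb _).resolve_left h.1, (hb _).resolve_left h.2.1, (hb _).resolve_left h.2.2⟩
    -- both rows through the middle one have slack, so that coordinate can move both ways
    have hy := eq_zero_of_isVertex_polyQ_Cn2 (y := Pi.single (t + 1) 1) h1 hvert
      (fun r hr => ?_) fun j hj => ?_
    · simpa using congrFun hy (t + 1)
    · have hrt : r ≠ t := by rintro rfl; linarith
      have hrt' : r ≠ t + 1 := by rintro rfl; linarith
      simp [hrt, hrt']
    · have : j ≠ t + 1 := by rintro rfl; linarith
      simp [this]
  · intro hwin
    obtain ⟨hrow, hnonneg⟩ := (mem_polyQ_Cn2_iff h1 v).1 hv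
    refine ⟨hv, fun x hx x' hx' hseg => ?_⟩
    obtain ⟨hxrow, hxnonneg⟩ := (mem_polyQ_Cn2_iff h1 x).1 hx
    obtain ⟨hx'row, hx'nonneg⟩ := (mem_polyQ_Cn2_iff h1 x').1 hx'
    have hseg' : ∀ q, v q ∈ openSegment ℝ (x q) (x' q) := fun q => by
      obtain ⟨a, b, ha, hb', hab, rfl⟩ := hseg
      exact ⟨a, b, ha, hb', hab, rfl⟩
    have hzero : ∀ q, v q = 0 → x q = 0 ∧ x' q = 0 := fun q hq => by
      rw [← hq]
      exact eq_of_mem_openSegment_of_le (hseg' q) (hq ▸ hxnonneg q) (hq ▸ hx'nonneg q)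
    have hge : ∀ q, v q ≤ x q ∧ v q ≤ x' q := fun q => by
      rcases hb q with hq | hq
      · exact hq ▸ ⟨hxnonneg q, hx'nonneg q⟩
      rw [hq]
      rcases sub_add_cancel q 1 ▸ hwin (q - 1) with h | h | h
      · have hr := hxrow (q - 1)
        have hr' := hx'row (q - 1)
        rw [sub_add_cancel] at hr hr'
        constructor <;> linarith [hzero _ h]
      · linarith
      · constructor <;> linarith [hzero _ h, hxrow q, hx'row q]
    funext q
    exact (eq_of_mem_openSegment_of_le (hseg' q) (hge q).1 (hge q).2).1

end Cn2

lemma IsBinaryVec.nonneg {n : ℕ} {v : Fin n → ℝ} (hb : IsBinaryVec v) (j : Fin n) : 0 ≤ v j := by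
  rcases hb j with h | h <;> simp [h]

lemma IsBinaryVec.le_one {n : ℕ} {v : Fin n → ℝ} (hb : IsBinaryVec v) (j : Fin n) : v j ≤ 1 := by
  rcases hb j with h | h <;> simp [h]

lemma IsBinaryVec.sum_eq_card {n : ℕ} {v : Fin n → ℝ} (hb : IsBinaryVec v) :
    ∑ k, v k = #{k | v k = 1} := by
  rw [← sum_boole]
  exact sum_congr rfl fun k _ => by rcases hb k with h | h <;> simp [h]

section Windows

open Fin.NatCast

variable {n : ℕ} [NeZero n] {v : Fin n → ℝ}

lemma sum_window (v : Fin n → ℝ) :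
    ∑ t, (v t + v (t + 1) + v (t + 1 + 1)) = 3 * ∑ t, v t := by
  have hshift : ∀ f : Fin n → ℝ, ∑ t, f (t + 1) = ∑ t, f t := fun f =>
    Equiv.sum_comp (Equiv.addRight (1 : Fin n)) f
  rw [sum_add_distrib, sum_add_distrib, hshift (fun t => v (t + 1)), hshift]
  ring

lemma IsBinaryVec.exists_eq_wVec (hb : IsBinaryVec v)
    (hwin : ∀ t, v t + v (t + 1) + v (t + 1 + 1) = 2) : ∃ i, v = wVec n i := by
  set g : ℕ → ℝ := fun m => v (m : Fin n)
  have hper : Function.Periodic g 3 := fun m => by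
    show g (m + 1 + 1 + 1) = g m
    have h₁ := hwin (m : Fin n)
    have h₂ := hwin ((m : Fin n) + 1)
    simp only [g, Nat.cast_succ]
    linarith
  have hv : ∀ k : Fin n, v k = g (k.val % 3) := fun k => by simp [g, hper.map_mod_nat]
  have hg : g 0 + g 1 + g 2 = 2 := by simpa [g, one_add_one_eq_two] using hwin 0
  obtain ⟨i, hi⟩ : ∃ i : Fin 3, ∀ r < 3, g r = if r = i.val then 0 else 1 := by
    have hbg : ∀ m, g m = 0 ∨ g m = 1 := fun m => hb _
    rcases hbg 0 with h₀ | h₀ <;> rcases hbg 1 with h₁ | h₁ <;> rcases hbg 2 with h₂ | h₂ <;>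
      norm_num [h₀, h₁, h₂] at hg
    · exact ⟨0, fun r hr => by interval_cases r <;> simp [h₀, h₁, h₂]⟩
    · exact ⟨1, fun r hr => by interval_cases r <;> simp [h₀, h₁, h₂]⟩
    · exact ⟨2, fun r hr => by interval_cases r <;> simp [h₀, h₁, h₂]⟩
  exact ⟨i, funext fun k => by rw [hv k, hi _ (Nat.mod_lt _ three_pos)]; rfl⟩

theorem IsBinaryVec.sum_le_of_isVertex_of_ne_wVec {ν : ℕ} (hn : n = 3 * ν) (h1 : 1 < n)
    (hb : IsBinaryVec v) (hv : IsVertex (polyQ (Cn2 n)) v) (hne : ∀ i, v ≠ wVec n i) :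
    ∑ k, v k ≤ 2 * ν - 1 := by
  have hwin : ∀ t, v t + v (t + 1) + v (t + 1 + 1) ≤ 2 := fun t => by
    rcases (hb.isVertex_polyQ_Cn2_iff h1 hv.1).1 hv t with h | h | h <;>
      linarith [hb.le_one t, hb.le_one (t + 1), hb.le_one (t + 1 + 1)]
  obtain ⟨t₀, ht₀⟩ : ∃ t, v t + v (t + 1) + v (t + 1 + 1) < 2 := by
    by_contra! h
    obtain ⟨i, rfl⟩ := hb.exists_eq_wVec fun t => le_antisymm (hwin t) (h t)
    exact hne i rfl
  have hlt : 3 * ∑ k, v k < 3 * (2 * ν) :=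
    calc 3 * ∑ k, v k = ∑ t, (v t + v (t + 1) + v (t + 1 + 1)) := (sum_window v).symm
      _ < ∑ _t : Fin n, (2 : ℝ) := sum_lt_sum (fun t _ => hwin t) ⟨t₀, mem_univ _, ht₀⟩
      _ = 3 * (2 * ν) := by simp [hn]; ring
  rw [hb.sum_eq_card] at hlt ⊢
  have hN : #{k | v k = 1} < 2 * ν := by
    exact_mod_cast (by linarith : (#{k | v k = 1} : ℝ) < 2 * ν)
  have : (#{k | v k = 1} : ℝ) + 1 ≤ 2 * ν := by exact_mod_cast hN
  linarith

end Windows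

lemma isBinaryVec_wVec (n : ℕ) (i : Fin 3) : IsBinaryVec (wVec n i) := fun k => by
  unfold wVec; split_ifs <;> simp

lemma AdjacentVerts.symm {n : ℕ} {S : Set (Fin n → ℝ)} {v w : Fin n → ℝ}
    (h : AdjacentVerts S v w) : AdjacentVerts S w v :=
  ⟨h.1.symm, h.2.2.1, h.2.1, segment_symm ℝ v w ▸ h.2.2.2⟩

section wVec

variable {n : ℕ} [NeZero n]

lemma wVec_window (h3 : 3 ∣ n) (i : Fin 3) (t : Fin n) :
    wVec n i t + wVec n i (t + 1) + wVec n i (t + 1 + 1) = 2 := by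
  obtain ⟨k, hk⟩ := h3
  have := t.val_add_one_cases
  have := (t + 1).val_add_one_cases
  have := t.isLt
  have := i.isLt
  simp only [wVec]
  split_ifs <;> norm_num <;> omega

lemma one_lt_of_three_dvd (h3 : 3 ∣ n) : 1 < n := by
  obtain ⟨k, hk⟩ := h3
  have := NeZero.ne n
  omega

lemma wVec_mem_polyQ (h3 : 3 ∣ n) (i : Fin 3) : wVec n i ∈ polyQ (Cn2 n) :=
  (mem_polyQ_Cn2_iff (one_lt_of_three_dvd h3) _).2
    ⟨fun t => by linarith [wVec_window h3 i t, (isBinaryVec_wVec n i).le_one (t + 1 + 1)],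
      (isBinaryVec_wVec n i).nonneg⟩

theorem isVertex_wVec (h3 : 3 ∣ n) (i : Fin 3) : IsVertex (polyQ (Cn2 n)) (wVec n i) := by
  have hb := isBinaryVec_wVec n i
  refine (hb.isVertex_polyQ_Cn2_iff (one_lt_of_three_dvd h3) (wVec_mem_polyQ h3 i)).2 fun t => ?_
  by_contra! h
  linarith [wVec_window h3 i t, (hb t).resolve_left h.1, (hb (t + 1)).resolve_left h.2.1,
    (hb (t + 1 + 1)).resolve_left h.2.2]

theorem sum_wVec {ν : ℕ} (hn : n = 3 * ν) (i : Fin 3) : ∑ k, wVec n i k = 2 * ν := by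
  have := sum_window (wVec n i)
  simp only [wVec_window ⟨ν, hn⟩, sum_const, card_univ, Fintype.card_fin, nsmul_eq_mul, hn] at this
  push_cast at this
  linarith

theorem not_adjacentVerts_wVec_add_one (h3 : 3 ∣ n) (hn3 : 3 < n) (i : Fin 3) :
    ¬AdjacentVerts (polyQ (Cn2 n)) (wVec n i) (wVec n (i + 1)) := by
  rintro ⟨-, -, -, hedge⟩
  have h1 := one_lt_of_three_dvd h3
  obtain ⟨k, hk⟩ := h3
  have hi : ((i + 1 : Fin 3) : ℕ) = (i.val + 1) % 3 := by simp [Fin.val_add]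
  have hi3 := i.isLt
  set m : Fin n → ℝ := (1 / 2 : ℝ) • (wVec n i + wVec n (i + 1))
  set u : Fin n → ℝ := fun q =>
    (if q.val = i.val then 1 else 0) - (if q.val = i.val + 1 then 1 else 0)
  have hm : m ∈ segment ℝ (wVec n i) (wVec n (i + 1)) :=
    ⟨1 / 2, 1 / 2, by norm_num, by norm_num, by norm_num, (smul_add _ _ _).symm⟩
  have hrow : ∀ t, ∑ j, Cn2 n t j * m j = 1 → ∑ j, Cn2 n t j * u j = 0 := fun t ht => by
    rw [sum_Cn2_mul h1] at ht ⊢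
    have := t.val_add_one_cases
    have := t.isLt
    simp only [m, u, wVec, hi, Pi.smul_apply, Pi.add_apply, smul_eq_mul] at ht ⊢
    split_ifs at ht ⊢ <;> norm_num at ht <;> norm_num <;> omega
  have hcol : ∀ j, m j = 0 → u j = 0 := fun j hj => by
    simp only [m, wVec, hi, Pi.smul_apply, Pi.add_apply, smul_eq_mul] at hj
    split_ifs at hj <;> first | omega | norm_num at hj
  obtain ⟨ε, hε, hplus, hminus⟩ := exists_pos_add_smul_mem_polyQ (hedge.subset hm) hrow hcol
  obtain ⟨a, b, -, -, -, hab⟩ := hedge.add_mem_of_sub_mem hm hplus hminus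
  -- every point of the edge has equal coordinates at `i` and `i + 3`
  have e₀ := congrFun hab ⟨i, by omega⟩
  have e₃ := congrFun hab ⟨i + 3, by omega⟩
  have hne : i.val % 3 ≠ (i.val + 1) % 3 := by omega
  simp [m, u, wVec, hi, hne] at e₀ e₃
  linarith

end wVec

/-- for `n = 3ν` odd with `ν ≥ 3`, the vectors `w^i = 1 - a^i` are vertices
of `Q(C(n,2))` with coordinate sum `2ν`, every other vertex has sum at most `2ν - 1`,
and distinct `w^i`, `w^j` are not adjacent in `Q(C(n,2))`. -/
theorem stmt17 {n ν : ℕ} [NeZero n] (hn : n = 3 * ν) (hν : 3 ≤ ν) (hodd : Odd n) :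
    (∀ i : Fin 3, IsVertex (polyQ (Cn2 n)) (wVec n i)) ∧
    (∀ i : Fin 3, ∑ k, wVec n i k = (2 * ν : ℝ)) ∧
    (∀ v : Fin n → ℝ, IsVertex (polyQ (Cn2 n)) v → (∀ i : Fin 3, v ≠ wVec n i) →
      ∑ k, v k ≤ (2 * ν : ℝ) - 1) ∧
    (∀ i j : Fin 3, i ≠ j → ¬ AdjacentVerts (polyQ (Cn2 n)) (wVec n i) (wVec n j)) := by
  have h3 : 3 ∣ n := ⟨ν, hn⟩
  have h1 : 1 < n := one_lt_of_three_dvd h3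
  refine ⟨isVertex_wVec h3, sum_wVec hn, fun v hv hne => ?_, fun i j hij => ?_⟩
  · rcases isBinaryVec_or_eq_half_of_isVertex hodd h1 hv with hb | rfl
    · exact hb.sum_le_of_isVertex_of_ne_wVec hn h1 hv hne
    · have : (3 : ℝ) ≤ ν := by exact_mod_cast hν
      simp [hn]
      linarith
  · obtain rfl | rfl : j = i + 1 ∨ i = j + 1 := by revert i j; decide
    · exact not_adjacentVerts_wVec_add_one h3 (by omega) i
    · exact fun h => not_adjacentVerts_wVec_add_one h3 (by omega) j h.symm
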